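/- In the Markov chain M' on simply connected acyclic digraphs over N vertices (transitions: delete a non-bridge arc, reverse a bridge arc, or add an arc preserving acyclicity), any two states are connected by a sequence of at most (N+7)(N−3/2) transitions. -/

import Mathlib

/-- A digraph given by its arc set is acyclic if no vertex lies on a directed cycle. -/
def DAcyclic {V : Type*} (A : Finset (V × V)) : Prop :=
  ∀ a : V, ¬ Relation.TransGen (fun x y => (x, y) ∈ A) a a

/-- The underlying undirected simple graph of an arc set. -/
def toGraph {V : Type*} [DecidableEq V] (A : Finset (V × V)) : SimpleGraph V where
  Adj a b := a ≠ b ∧ ((a, b) ∈ A ∨ (b, a) ∈ A)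
  symm := ⟨fun _ _ h => ⟨h.1.symm, h.2.symm⟩⟩
  loopless := ⟨fun _ h => h.1 rfl⟩

instance {V : Type*} [DecidableEq V] (A : Finset (V × V)) :
    DecidableRel (toGraph A).Adj :=
  fun a b => inferInstanceAs (Decidable (a ≠ b ∧ ((a, b) ∈ A ∨ (b, a) ∈ A)))

/-- One transition of the Markov chain `M'`: delete a non-bridge arc, reverse a
bridge arc, or add an arc so that the result is acyclic. -/
def Move {V : Type*} [DecidableEq V] (X Y : Finset (V × V)) : Prop :=
  (∃ i j : V, (i, j) ∈ X ∧ ¬(toGraph X).IsBridge s(i, j) ∧ Y = X.erase (i, j)) ∨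
  (∃ i j : V, (i, j) ∈ X ∧ (toGraph X).IsBridge s(i, j) ∧
    Y = insert (j, i) (X.erase (i, j))) ∨
  (∃ i j : V, (i, j) ∉ X ∧ Y = insert (i, j) X ∧ DAcyclic Y)


/-!
Every state has a source `r`, and adding the out-star `{(r, j) | j ≠ r}` keeps it acyclic.
Whenever `X ∪ Y` is acyclic, `Y` is reached from `X` by adding the arcs of `Y \ X` and then
deleting those of `X \ Y`; no deleted arc is a bridge because `Y` stays connected, and the
number of moves is at most `|X ∪ Y| ≤ N(N-1)/2`. This leads from `G` to the out-star at a source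
of `G`, and from the out-star at a source of `H` to `H`. Two out-stars at `r ≠ s` are joined in
`2N - 3` moves: reverse the bridge `(r, s)`, then trade each arc `(r, j)` for `(s, j)`.
Altogether `N² + N - 3 ≤ (N + 7)(N - 3/2)` moves suffice.
-/

open Finset

section Acyclic

variable {V : Type*} {A B : Finset (V × V)}

lemma DAcyclic.mono (h : A ⊆ B) (hB : DAcyclic B) : DAcyclic A := fun a ha =>
  hB a (Relation.TransGen.mono (fun _ _ hxy => h hxy) a a ha)

lemma dacyclic_of_rank (f : V → ℕ) (hf : ∀ p ∈ A, f p.1 < f p.2) : DAcyclic A := by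
  have key : ∀ x y, Relation.TransGen (fun x y => (x, y) ∈ A) x y → f x < f y := by
    intro x y h
    induction h with
    | single h => exact hf _ h
    | tail _ h ih => exact ih.trans (hf _ h)
  exact fun a ha => lt_irrefl _ (key a a ha)

lemma DAcyclic.ne (h : DAcyclic A) {i j : V} (hij : (i, j) ∈ A) : i ≠ j := by
  rintro rfl
  exact h i (.single hij)

lemma DAcyclic.swap_notMem (h : DAcyclic A) {i j : V} (hij : (i, j) ∈ A) : (j, i) ∉ A :=
  fun hji => h i ((Relation.TransGen.single hij).tail hji)

variable [Fintype V]

lemma DAcyclic.exists_rank (h : DAcyclic A) : ∃ f : V → ℕ, ∀ p ∈ A, f p.1 < f p.2 := by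
  classical
  refine ⟨fun x => #{y | Relation.TransGen (fun u v => (u, v) ∈ A) y x}, ?_⟩
  rintro ⟨a, b⟩ hab
  refine card_lt_card ⟨fun z hz => ?_, fun hsub => h a ?_⟩
  · simp only [mem_filter, mem_univ, true_and] at hz ⊢
    exact hz.tail hab
  · simpa using hsub (by simpa using Relation.TransGen.single hab)

lemma DAcyclic.exists_source [Nonempty V] (h : DAcyclic A) : ∃ r : V, ∀ j, (j, r) ∉ A := by
  obtain ⟨f, hf⟩ := h.exists_rank
  obtain ⟨r, -, hr⟩ := exists_min_image univ f univ_nonempty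
  exact ⟨r, fun j hj => (hf _ hj).not_ge (hr j (mem_univ j))⟩

/-- `A` and its reverse are disjoint sets of off-diagonal pairs. -/
lemma DAcyclic.two_mul_card_le [DecidableEq V] (h : DAcyclic A) :
    2 * #A ≤ Fintype.card V * Fintype.card V - Fintype.card V := by
  have hdisj : Disjoint A (A.map (Equiv.prodComm V V).toEmbedding) := by
    rw [disjoint_left]
    rintro ⟨i, j⟩ hij hji
    simp only [mem_map_equiv, Equiv.prodComm_symm, Equiv.prodComm_apply, Prod.swap_prod_mk] at hji
    exact h.swap_notMem hij hji
  calc 2 * #A = #(A ∪ A.map (Equiv.prodComm V V).toEmbedding) := by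
        rw [card_union_of_disjoint hdisj, card_map]; ring
    _ ≤ #(univ : Finset V).offDiag := by
        refine card_le_card fun p hp => mem_offDiag.mpr ⟨mem_univ _, mem_univ _, ?_⟩
        rcases mem_union.mp hp with hp | hp
        · exact h.ne hp
        · obtain ⟨q, hq, rfl⟩ := mem_map.mp hp
          exact (h.ne hq).symm
    _ = _ := by rw [offDiag_card, card_univ]

lemma DAcyclic.two_mul_card_symmDiff_le [DecidableEq V] (h : DAcyclic (A ∪ B)) :
    2 * (#(B \ A) + #(A \ B)) ≤ Fintype.card V * Fintype.card V - Fintype.card V := by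
  have : #(B \ A) + #(A \ B) ≤ #(A ∪ B) := by
    rw [union_comm, ← card_sdiff_add_card]
    exact Nat.add_le_add_left (card_le_card sdiff_subset) _
  exact (Nat.mul_le_mul_left 2 this).trans h.two_mul_card_le

end Acyclic

section Graph

variable {V : Type*} [DecidableEq V] {A B : Finset (V × V)}

lemma toGraph_mono (h : A ⊆ B) : toGraph A ≤ toGraph B :=
  fun _ _ hab => ⟨hab.1, hab.2.imp (h ·) (h ·)⟩

lemma toGraph_reverse {i j : V} (hij : (i, j) ∈ A) :
    toGraph (insert (j, i) (A.erase (i, j))) = toGraph A := by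
  ext a b
  simp only [toGraph, mem_insert, mem_erase, ne_eq, Prod.mk.injEq]
  constructor
  · rintro ⟨hne, (⟨rfl, rfl⟩ | ⟨-, h⟩) | (⟨rfl, rfl⟩ | ⟨-, h⟩)⟩ <;> tauto
  · rintro ⟨hne, h | h⟩
    · by_cases hab : a = i ∧ b = j <;> tauto
    · by_cases hab : b = i ∧ a = j <;> tauto

lemma toGraph_le_deleteEdges {i j : V} (hAB : A ⊆ B) (hij : (i, j) ∉ A) (hji : (j, i) ∉ A) :
    toGraph A ≤ (toGraph B).deleteEdges {s(i, j)} := by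
  rintro a b ⟨hne, hab⟩
  refine SimpleGraph.deleteEdges_adj.mpr ⟨toGraph_mono hAB ⟨hne, hab⟩, ?_⟩
  rw [Set.mem_singleton_iff, Sym2.eq_iff]
  rintro (⟨rfl, rfl⟩ | ⟨rfl, rfl⟩) <;> tauto

lemma not_isBridge_of_connected {i j : V} (hA : (toGraph A).Connected) (hAB : A ⊆ B)
    (hij : (i, j) ∉ A) (hji : (j, i) ∉ A) : ¬ (toGraph B).IsBridge s(i, j) := fun h =>
  h ((hA.preconnected i j).mono (toGraph_le_deleteEdges hAB hij hji))

lemma SimpleGraph.isBridge_of_forall_adj_eq {W : Type*} {G : SimpleGraph W} {u v : W}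
    (huv : u ≠ v) (h : ∀ w, G.Adj v w → w = u) : G.IsBridge s(u, v) := by
  rw [SimpleGraph.isBridge_iff]
  rintro ⟨p⟩
  cases p.reverse with
  | nil => exact huv rfl
  | cons hadj _ =>
    obtain ⟨hadj, hne⟩ := SimpleGraph.deleteEdges_adj.mp hadj
    exact hne (by rw [h _ hadj, Sym2.eq_swap]; rfl)

end Graph

section States

variable {V : Type*} [DecidableEq V]

def IsState (X : Finset (V × V)) : Prop := (toGraph X).Connected ∧ DAcyclic X

inductive MoveSeq : ℕ → Finset (V × V) → Finset (V × V) → Prop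
  | refl {X} : IsState X → MoveSeq 0 X X
  | head {k X Y Z} : IsState X → Move X Y → MoveSeq k Y Z → MoveSeq (k + 1) X Z

namespace MoveSeq

variable {k m : ℕ} {X Y Z : Finset (V × V)}

lemma trans (h₁ : MoveSeq k X Y) (h₂ : MoveSeq m Y Z) : MoveSeq (k + m) X Z := by
  induction h₁ with
  | refl => simpa using h₂
  | head hX hmove _ ih => simpa [Nat.add_right_comm] using head hX hmove (ih h₂)

lemma exists_list (h : MoveSeq k X Y) :
    ∃ l : List (Finset (V × V)), l.head? = some X ∧ l.getLast? = some Y ∧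
      (∀ Z ∈ l, IsState Z) ∧ l.IsChain Move ∧ l.length = k + 1 := by
  induction h with
  | refl hX => exact ⟨[_], rfl, rfl, by simpa using hX, List.isChain_singleton _, rfl⟩
  | head hX hmove _ ih =>
    obtain ⟨l, hhead, hlast, hstates, hchain, hlen⟩ := ih
    obtain _ | ⟨Y, l⟩ := l
    · simp at hhead
    obtain rfl : Y = _ := Option.some.inj hhead
    refine ⟨_ :: Y :: l, rfl, by simpa using hlast, by simpa [hX] using hstates,
      .cons_cons hmove hchain, by simp [← hlen]⟩

lemma of_add (hX : (toGraph X).Connected) (S : Finset (V × V)) (hXS : Disjoint X S)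
    (hA : DAcyclic (X ∪ S)) : MoveSeq #S X (X ∪ S) := by
  induction S using Finset.induction_on generalizing X with
  | empty => simpa using refl ⟨hX, by simpa using hA⟩
  | @insert a S ha ih =>
    have haX : a ∉ X := disjoint_right.mp hXS (mem_insert_self a S)
    have hunion : insert a X ∪ S = X ∪ insert a S := by rw [insert_union, union_insert]
    have hA' : DAcyclic (insert a X) := hA.mono (hunion ▸ subset_union_left)
    have hmove : Move X (insert a X) := Or.inr (Or.inr ⟨a.1, a.2, haX, rfl, hA'⟩)
    have hconn : (toGraph (insert a X)).Connected := hX.mono (toGraph_mono (subset_insert a X))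
    rw [card_insert_of_notMem ha, ← hunion]
    have hXS' : Disjoint (insert a X) S :=
      disjoint_insert_left.mpr ⟨ha, hXS.mono_right (subset_insert a S)⟩
    exact head ⟨hX, hA'.mono (subset_insert a X)⟩ hmove (ih hconn hXS' (hunion ▸ hA))

lemma of_delete (hY : IsState Y) (D : Finset (V × V)) (hYD : Disjoint Y D)
    (hA : DAcyclic (Y ∪ D)) : MoveSeq #D (Y ∪ D) Y := by
  induction D using Finset.induction_on with
  | empty => simpa using refl hY
  | @insert a D ha ih =>
    have haY : a ∉ Y := disjoint_right.mp hYD (mem_insert_self a D)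
    have hYD' : Disjoint Y D := hYD.mono_right (subset_insert a D)
    have ha' : a ∈ Y ∪ insert a D := by simp
    have hrev : (a.2, a.1) ∉ Y := fun h => hA.swap_notMem ha' (subset_union_left h)
    have hnb : ¬ (toGraph (Y ∪ insert a D)).IsBridge s(a.1, a.2) :=
      not_isBridge_of_connected hY.1 subset_union_left haY hrev
    have herase : (Y ∪ insert a D).erase a = Y ∪ D := by
      rw [union_insert, erase_insert (by simp [ha, haY])]
    have hmove : Move (Y ∪ insert a D) (Y ∪ D) := Or.inl ⟨a.1, a.2, ha', hnb, herase.symm⟩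
    have hconn : (toGraph (Y ∪ insert a D)).Connected :=
      hY.1.mono (toGraph_mono subset_union_left)
    rw [card_insert_of_notMem ha]
    exact head ⟨hconn, hA⟩ hmove
      (ih hYD' (hA.mono (union_subset_union_right (subset_insert a D))))

lemma of_union (hX : IsState X) (hY : IsState Y) (hA : DAcyclic (X ∪ Y)) :
    MoveSeq (#(Y \ X) + #(X \ Y)) X Y := by
  have hXY : X ∪ (Y \ X) = X ∪ Y := union_sdiff_self_eq_union
  have hYX : Y ∪ (X \ Y) = X ∪ Y := by rw [union_sdiff_self_eq_union, union_comm]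
  have hadd := of_add hX.1 (Y \ X) disjoint_sdiff (hXY ▸ hA)
  have hdel := of_delete hY (X \ Y) disjoint_sdiff (hYX ▸ hA)
  rw [hXY] at hadd
  rw [hYX] at hdel
  exact hadd.trans hdel

end MoveSeq

end States

section Star

variable {V : Type*} [DecidableEq V] [Fintype V]

def outStar (r : V) : Finset (V × V) := (univ.erase r).map (Function.Embedding.sectR r V)

@[simp] lemma mem_outStar {r a b : V} : (a, b) ∈ outStar r ↔ a = r ∧ b ≠ r := by
  simp only [outStar, mem_map, mem_erase, mem_univ, and_true, Function.Embedding.sectR_apply,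
    Prod.mk.injEq]
  constructor
  · rintro ⟨b, hb, rfl, rfl⟩
    exact ⟨rfl, hb⟩
  · rintro ⟨rfl, hb⟩
    exact ⟨b, hb, rfl, rfl⟩

lemma card_outStar (r : V) : #(outStar r) = Fintype.card V - 1 := by
  simp [outStar, card_erase_of_mem]

lemma isState_outStar (r : V) : IsState (outStar r) := by
  refine ⟨?_, dacyclic_of_rank (fun v => if v = r then 0 else 1) ?_⟩
  · have : ∀ v, (toGraph (outStar r)).Reachable r v := fun v => by
      by_cases hv : v = r
      · rw [hv]
      · exact SimpleGraph.Adj.reachable ⟨Ne.symm hv, Or.inl (by simpa using hv)⟩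
    exact { preconnected := fun u v => (this u).symm.trans (this v), nonempty := ⟨r⟩ }
  · rintro ⟨a, b⟩ hab
    simp_all

lemma isBridge_outStar {r s : V} (hrs : r ≠ s) : (toGraph (outStar r)).IsBridge s(r, s) :=
  SimpleGraph.isBridge_of_forall_adj_eq hrs fun w ⟨_, h⟩ => by
    rcases h with h | h <;> simp only [mem_outStar] at h
    exacts [absurd h.1.symm hrs, h.1]

lemma DAcyclic.union_outStar {A : Finset (V × V)} (h : DAcyclic A) {r : V}
    (hr : ∀ j, (j, r) ∉ A) : DAcyclic (A ∪ outStar r) := by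
  obtain ⟨f, hf⟩ := h.exists_rank
  refine dacyclic_of_rank (fun x => if x = r then 0 else f x + 1) ?_
  rintro ⟨a, b⟩ hab
  rcases mem_union.mp hab with hab | hab
  · have hb : b ≠ r := fun hb => hr a (hb ▸ hab)
    have := hf _ hab
    split_ifs <;> simp_all
  · simp_all

end Star

/-- Reverse the bridge `(r, s)`, then trade each arc `(r, j)` for `(s, j)`. -/
lemma MoveSeq.outStar_outStar {V : Type*} [DecidableEq V] [Fintype V] (r s : V) :
    ∃ k ≤ 2 * Fintype.card V - 3, MoveSeq k (outStar r) (outStar s) := by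
  by_cases hrs : r = s
  · exact ⟨0, Nat.zero_le _, hrs ▸ .refl (isState_outStar r)⟩
  have hrs_mem : (r, s) ∈ outStar r := mem_outStar.mpr ⟨rfl, Ne.symm hrs⟩
  set T := insert (s, r) ((outStar r).erase (r, s)) with hT_def
  have hmove : Move (outStar r) T := Or.inr (Or.inl ⟨r, s, hrs_mem, isBridge_outStar hrs, rfl⟩)
  have hTs : DAcyclic (T ∪ outStar s) := by
    refine dacyclic_of_rank (fun v => if v = s then 0 else if v = r then 1 else 2) ?_
    rintro ⟨a, b⟩ hab
    simp only [hT_def, mem_union, mem_insert, mem_erase, mem_outStar, ne_eq, Prod.mk.injEq] at hab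
    rcases hab with (⟨rfl, rfl⟩ | ⟨hne, rfl, hb⟩) | ⟨rfl, hb⟩
    · simp [hrs]
    · have hbs : b ≠ s := fun h => hne ⟨rfl, h⟩
      simp [hrs, hb, hbs]
    · simp only [hb, if_false, if_true]
      split_ifs <;> simp
  have hT : IsState T :=
    ⟨toGraph_reverse hrs_mem ▸ (isState_outStar r).1, hTs.mono subset_union_left⟩
  have hcard_erase :
      ∀ {a b : V}, a ≠ b → #((outStar a).erase (a, b)) = Fintype.card V - 1 - 1 := by
    intro a b hab
    rw [card_erase_of_mem (mem_outStar.mpr ⟨rfl, Ne.symm hab⟩), card_outStar]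
  have h₁ : #(outStar s \ T) ≤ Fintype.card V - 1 - 1 := by
    rw [← hcard_erase (Ne.symm hrs)]
    refine card_le_card fun p hp => mem_erase.mpr ⟨?_, (mem_sdiff.mp hp).1⟩
    rintro rfl
    exact (mem_sdiff.mp hp).2 (mem_insert_self _ _)
  have h₂ : #(T \ outStar s) ≤ Fintype.card V - 1 - 1 := by
    rw [← hcard_erase hrs]
    refine card_le_card fun p hp => ?_
    obtain ⟨hpT, hps⟩ := mem_sdiff.mp hp
    rcases mem_insert.mp hpT with rfl | hp
    exacts [absurd (mem_outStar.mpr ⟨rfl, hrs⟩) hps, hp]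
  have hV : 0 < #(outStar r) := card_pos.mpr ⟨_, hrs_mem⟩
  rw [card_outStar] at hV
  exact ⟨_, by omega, .head (isState_outStar r) hmove (.of_union hT (isState_outStar s) hTs)⟩

/-- Any two states of `M'` are joined by at most `(N+7)(N-3/2)` transitions, i.e. by
`k` transitions with `2k ≤ (N+7)(2N-3)`. -/
theorem stmt_11 (N : ℕ) (hN : 2 ≤ N) (G H : Finset (Fin N × Fin N))
    (hG : (toGraph G).Connected ∧ DAcyclic G)
    (hH : (toGraph H).Connected ∧ DAcyclic H) :
    ∃ l : List (Finset (Fin N × Fin N)), l.head? = some G ∧ l.getLast? = some H ∧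
      (∀ X ∈ l, (toGraph X).Connected ∧ DAcyclic X) ∧
      l.Chain' Move ∧
      2 * (l.length - 1) ≤ (N + 7) * (2 * N - 3) := by
  have : Nonempty (Fin N) := ⟨⟨0, by omega⟩⟩
  obtain ⟨r, hr⟩ := hG.2.exists_source
  obtain ⟨s, hs⟩ := hH.2.exists_source
  have hGr := hG.2.union_outStar hr
  have hsH : DAcyclic (outStar s ∪ H) := union_comm H _ ▸ hH.2.union_outStar hs
  obtain ⟨k, hk, hrs⟩ := MoveSeq.outStar_outStar r s
  obtain ⟨l, hhead, hlast, hstates, hchain, hlen⟩ :=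
    (((MoveSeq.of_union hG (isState_outStar r) hGr).trans hrs).trans
      (MoveSeq.of_union (isState_outStar s) hH hsH)).exists_list
  refine ⟨l, hhead, hlast, hstates, hchain, ?_⟩
  have hG' := hGr.two_mul_card_symmDiff_le
  have hH' := hsH.two_mul_card_symmDiff_le
  rw [Fintype.card_fin] at hk hG' hH'
  obtain ⟨n, rfl⟩ : ∃ n, N = n + 2 := ⟨N - 2, by omega⟩
  have hsq : (n + 2) * (n + 2) - (n + 2) = n * n + 3 * n + 2 := by
    rw [Nat.sub_eq_of_eq_add]; ring
  have hbound : (n + 2 + 7) * (2 * (n + 2) - 3) = 2 * (n * n) + 19 * n + 9 := by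
    rw [show 2 * (n + 2) - 3 = 2 * n + 1 by omega]; ring
  omega
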